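/- Fix an integer d ≥ 1, p ∈ (1,∞), a penalty function φ, and let μ ∈ 𝒫_p(ℝ^d). Then for every t ≥ 0 and f ∈ C₀(ℝ^d), the function S(t)f belongs to C₀(ℝ^d); moreover, S(t)f has the same modulus of continuity as f: for all ε, δ > 0, if |f(x) − f(y)| ≤ ε whenever |x − y| ≤ δ, then |S(t)f(x) − S(t)f(y)| ≤ ε whenever |x − y| ≤ δ. -/

import Mathlib

open MeasureTheory Filter Topology ENNReal NNReal Set ZeroAtInfty
noncomputable section

/-- Euclidean space ℝ^d. -/
abbrev Ed (d : ℕ) := EuclideanSpace ℝ (Fin d)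

/-- `𝒫_p(ℝ^d)`: Borel probability measures with finite `p`-th moment. -/
def MemPp {d : ℕ} (p : ℝ) (μ : Measure (Ed d)) : Prop :=
  IsProbabilityMeasure μ ∧ ∫⁻ x, (‖x‖₊ : ℝ≥0∞) ^ p ∂μ < ∞

/-- `γ` is a coupling of `μ` and `ν`. -/
def IsCoupling {d : ℕ} (γ : Measure (Ed d × Ed d)) (μ ν : Measure (Ed d)) : Prop :=
  γ.map Prod.fst = μ ∧ γ.map Prod.snd = ν

/-- The `p`-Wasserstein distance `𝒲_p(μ, ν)`. -/
def Wp {d : ℕ} (p : ℝ) (μ ν : Measure (Ed d)) : ℝ :=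
  (⨅ γ ∈ {γ : Measure (Ed d × Ed d) | IsCoupling γ μ ν},
    (∫⁻ q, (‖q.2 - q.1‖₊ : ℝ≥0∞) ^ p ∂γ) ^ (1 / p)).toReal

/-- The scaled penalty `φ_t(r) = t·φ(r/t)` for `t > 0`; `φ_0(0) = 0`, `φ_0(r) = ∞` for `r > 0`. -/
def phit (φ : ℝ≥0 → ℝ≥0∞) (t : ℝ) (r : ℝ≥0) : ℝ≥0∞ :=
  if 0 < t then (t.toNNReal : ℝ≥0∞) * φ (r / t.toNNReal) else (if r = 0 then 0 else ∞)

/-- `φ` is a penalty function: lower semicontinuous, convex, increasing, not constant,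
`φ(0) = 0`, and `x ↦ φ(x^{1/p})` is convex. -/
structure IsPenalty (p : ℝ) (φ : ℝ≥0 → ℝ≥0∞) : Prop where
  lsc : LowerSemicontinuous φ
  convex : ∀ a b l m : ℝ≥0, l + m = 1 →
    φ (l * a + m * b) ≤ (l : ℝ≥0∞) * φ a + (m : ℝ≥0∞) * φ b
  mono : Monotone φ
  not_const : ∃ a b, φ a ≠ φ b
  map_zero : φ 0 = 0
  convex_rpow : ∀ a b l m : ℝ≥0, l + m = 1 →
    φ ((l * a + m * b) ^ (1 / p)) ≤ (l : ℝ≥0∞) * φ (a ^ (1 / p)) + (m : ℝ≥0∞) * φ (b ^ (1 / p))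

/-- The convex conjugate `φ*(y) = sup_{x ≥ 0} (xy − φ(x))`. -/
def phiStar (φ : ℝ≥0 → ℝ≥0∞) (y : ℝ≥0) : ℝ≥0∞ :=
  ⨆ x : ℝ≥0, ((x * y : ℝ≥0) : ℝ≥0∞) - φ x

/-- The one-step operator `S(t)f(x) = sup_ν ( ∫ f(x+y) ν(dy) − φ_t(𝒲_p(μ_t, ν)) )`. -/
def Sop {d : ℕ} (p : ℝ) (φ : ℝ≥0 → ℝ≥0∞) (μt : Measure (Ed d)) (t : ℝ)
    (f : Ed d → ℝ) (x : Ed d) : ℝ :=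
  sSup { r : ℝ | ∃ ν : Measure (Ed d), MemPp p ν ∧ ∃ c : ℝ, 0 ≤ c ∧
    phit φ t (Wp p μt ν).toNNReal ≤ ENNReal.ofReal c ∧ r = (∫ y, f (x + y) ∂ν) - c }

/-- The iterated operator `𝒮ⁿ(t) = S(2⁻ⁿ)^{∘ k} ∘ S(t − k·2⁻ⁿ)`, `k = ⌊2ⁿ t⌋`. -/
def SiterN {d : ℕ} (p : ℝ) (φ : ℝ≥0 → ℝ≥0∞) (μ : ℝ → Measure (Ed d)) (n : ℕ) (t : ℝ)
    (f : Ed d → ℝ) : Ed d → ℝ :=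
  (fun g => Sop p φ (μ ((2 : ℝ) ^ n)⁻¹) ((2 : ℝ) ^ n)⁻¹ g)^[⌊(2:ℝ)^n * t⌋₊]
    (Sop p φ (μ (t - ⌊(2:ℝ)^n * t⌋₊ * ((2:ℝ)^n)⁻¹)) (t - ⌊(2:ℝ)^n * t⌋₊ * ((2:ℝ)^n)⁻¹) f)

/-- The limiting operator `𝒮(t)f = lim_n 𝒮ⁿ(t)f` (a decreasing limit, i.e. an infimum). -/
def Slim {d : ℕ} (p : ℝ) (φ : ℝ≥0 → ℝ≥0∞) (μ : ℝ → Measure (Ed d)) (t : ℝ)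
    (f : Ed d → ℝ) (x : Ed d) : ℝ :=
  ⨅ n : ℕ, SiterN p φ μ n t f x

/-- `f ∈ C₀(ℝ^d)`: continuous and vanishing at infinity. -/
def IsC0 {d : ℕ} (f : Ed d → ℝ) : Prop :=
  Continuous f ∧ Tendsto f (cocompact (Ed d)) (𝓝 0)

/-- `(μ_t)_{t ≥ 0}` is a convolution semigroup in `𝒫_p(ℝ^d)`. -/
def IsConvSemigroup {d : ℕ} (p : ℝ) (μ : ℝ → Measure (Ed d)) : Prop :=
  μ 0 = Measure.dirac 0 ∧ (∀ s t : ℝ, 0 ≤ s → 0 ≤ t → μ (s + t) = (μ s).conv (μ t)) ∧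
    ∀ t : ℝ, 0 ≤ t → MemPp p (μ t)

/-- `𝒲_p(μ_t, δ_0) → 0` as `t ↓ 0`. -/
def WContinuousAtZero {d : ℕ} (p : ℝ) (μ : ℝ → Measure (Ed d)) : Prop :=
  Tendsto (fun t => Wp p (μ t) (Measure.dirac 0)) (𝓝[>] (0:ℝ)) (𝓝 0)

/-- The semigroup of the underlying Lévy process, `S^μ(t)f(x) = ∫ f(x+y) μ_t(dy)`. -/
def Smu {d : ℕ} (μ : ℝ → Measure (Ed d)) (t : ℝ) (f : Ed d → ℝ) (x : Ed d) : ℝ :=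
  ∫ y, f (x + y) ∂(μ t)

/-- `f ∈ D(A^μ)` with `A^μ f = Af`: `(S^μ(t)f − f)/t → Af` uniformly as `t ↓ 0`. -/
def HasGenerator {d : ℕ} (μ : ℝ → Measure (Ed d)) (f Af : Ed d → ℝ) : Prop :=
  TendstoUniformly (fun t x => (Smu μ t f x - f x) / t) Af (𝓝[>] (0:ℝ))

/-- `f ∈ C₀¹(ℝ^d)`: continuously differentiable, vanishing at infinity, with gradient
vanishing at infinity. -/
def IsC01 {d : ℕ} (f : Ed d → ℝ) : Prop :=
  IsC0 f ∧ ContDiff ℝ 1 f ∧ Tendsto (fun x => gradient f x) (cocompact (Ed d)) (𝓝 0)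

/-!
Shifting `x` shifts the payoff `∫ f (x + ·) dν - c` of every competitor `ν` by at most the
oscillation of `f`, so `S(t)f` inherits the modulus of continuity of `f`. For decay at infinity,
the competitor `ν = μ` gives `S(t)f(x) ≥ ∫ f (x + ·) dμ`, which is small because `μ` is tight.
Conversely a competitor only gains by putting mass on the ball where `f (x + ·)` is not small;
that ball runs off to infinity with `x` while `μ` stays concentrated on a compact set, so
`𝒲_p(μ, ν)` becomes large, and since `φ_t` grows to infinity the penalty exceeds `‖f‖`.
-/

lemma ZeroAtInftyContinuousMap.norm_coe_le_norm {α β : Type*} [TopologicalSpace α]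
    [SeminormedAddCommGroup β] (f : C₀(α, β)) (x : α) : ‖f x‖ ≤ ‖f‖ :=
  norm_toBCF_eq_norm (f := f) ▸ f.toBCF.norm_coe_le_norm x

lemma tendsto_cocompact_nhds_zero_iff {E : Type*} [NormedAddCommGroup E] [ProperSpace E]
    {g : E → ℝ} :
    Tendsto g (cocompact E) (𝓝 0) ↔ ∀ ε > 0, ∃ R, ∀ x, R < ‖x‖ → |g x| ≤ ε := by
  rw [← Metric.cobounded_eq_cocompact,
    (Metric.hasBasis_cobounded_compl_closedBall 0).tendsto_iff Metric.nhds_basis_closedBall]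
  simp

lemma abs_integral_le_add_mul_measureReal {α : Type*} [MeasurableSpace α] {ν : Measure α}
    [IsProbabilityMeasure ν] {g : α → ℝ} (hg : Measurable g) {B : Set α} (hB : MeasurableSet B)
    {η M : ℝ} (hη : 0 ≤ η) (hgB : ∀ z ∉ B, |g z| ≤ η) (hgM : ∀ z, |g z| ≤ M) :
    |∫ z, g z ∂ν| ≤ η + M * ν.real B := by
  have hpt : ∀ z, |g z| ≤ η + B.indicator (fun _ => M) z := fun z => by
    by_cases hz : z ∈ B
    · rw [indicator_of_mem hz]
      linarith [hgM z]
    · rw [indicator_of_notMem hz, add_zero]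
      exact hgB z hz
  have hind : Integrable (B.indicator fun _ => M) ν := (integrable_const M).indicator hB
  calc |∫ z, g z ∂ν| ≤ ∫ z, |g z| ∂ν := abs_integral_le_integral_abs
    _ ≤ ∫ z, (η + B.indicator (fun _ => M) z) ∂ν :=
        integral_mono (Integrable.of_bound hg.aestronglyMeasurable M (ae_of_all _ hgM)).abs
          ((integrable_const η).add hind) hpt
    _ = η + M * ν.real B := by
        rw [integral_add (integrable_const η) hind, integral_indicator_const M hB]
        simp [mul_comm]

lemma norm_le_add_add_norm_sub_of_mem_closedBall {E : Type*} [SeminormedAddCommGroup E]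
    {x a b : E} {R S : ℝ} (ha : a ∈ Metric.closedBall 0 S) (hb : b ∈ Metric.closedBall (-x) R) :
    ‖x‖ ≤ R + S + ‖b - a‖ := by
  rw [mem_closedBall_zero_iff] at ha
  rw [Metric.mem_closedBall, dist_eq_norm, sub_neg_eq_add] at hb
  calc ‖x‖ = ‖b + x - (b - a) - a‖ := by congr 1; abel
    _ ≤ ‖b + x‖ + ‖b - a‖ + ‖a‖ := (norm_sub_le _ _).trans (by gcongr; exact norm_sub_le _ _)
    _ ≤ R + S + ‖b - a‖ := by linarith

section Wasserstein

variable {d : ℕ} {p : ℝ} {μ ν : Measure (Ed d)} {γ : Measure (Ed d × Ed d)}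

lemma measurable_transportCost :
    Measurable fun q : Ed d × Ed d => (‖q.2 - q.1‖₊ : ℝ≥0∞) ^ p :=
  ((measurable_snd.sub measurable_fst).nnnorm.coe_nnreal_ennreal).pow_const p

lemma isCoupling_prod [IsProbabilityMeasure μ] [IsProbabilityMeasure ν] :
    IsCoupling (μ.prod ν) μ ν :=
  ⟨by simp [Measure.map_fst_prod], by simp [Measure.map_snd_prod]⟩

lemma IsCoupling.measure_le_prod_add (hγ : IsCoupling γ μ ν) (A : Set (Ed d)) {B : Set (Ed d)}
    (hB : MeasurableSet B) : ν B ≤ γ (A ×ˢ B) + μ Aᶜ := by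
  calc ν B = γ (Prod.snd ⁻¹' B) := by rw [← hγ.2, Measure.map_apply measurable_snd hB]
    _ ≤ γ (A ×ˢ B ∪ Prod.fst ⁻¹' Aᶜ) := measure_mono fun q hq => by
        by_cases hqA : q.1 ∈ A
        exacts [Or.inl ⟨hqA, hq⟩, Or.inr hqA]
    _ ≤ γ (A ×ˢ B) + γ (Prod.fst ⁻¹' Aᶜ) := measure_union_le _ _
    _ ≤ γ (A ×ˢ B) + μ Aᶜ := by
        gcongr
        rw [← hγ.1]
        exact Measure.le_map_apply measurable_fst.aemeasurable _

lemma ofReal_rpow_mul_measure_le_lintegral_transportCost (hp : 0 ≤ p) {A B : Set (Ed d)}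
    {L : ℝ} (hL : ∀ a ∈ A, ∀ b ∈ B, L ≤ ‖b - a‖) :
    ENNReal.ofReal L ^ p * γ (A ×ˢ B) ≤ ∫⁻ q, (‖q.2 - q.1‖₊ : ℝ≥0∞) ^ p ∂γ := by
  refine le_trans ?_
    (mul_meas_ge_le_lintegral₀ measurable_transportCost.aemeasurable (ENNReal.ofReal L ^ p))
  gcongr
  rintro q ⟨ha, hb⟩
  refine ENNReal.rpow_le_rpow ?_ hp
  exact ENNReal.ofReal_le_of_le_toReal (by simpa using hL _ ha _ hb)

lemma lintegral_transportCost_prod_ne_top (hp : 0 ≤ p) (hμ : MemPp p μ) (hν : MemPp p ν) :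
    ∫⁻ q, (‖q.2 - q.1‖₊ : ℝ≥0∞) ^ p ∂(μ.prod ν) ≠ ∞ := by
  have := hμ.1
  have := hν.1
  have hmom : Measurable fun y : Ed d => (‖y‖₊ : ℝ≥0∞) ^ p :=
    measurable_nnnorm.coe_nnreal_ennreal.pow_const p
  have hpt : ∀ q : Ed d × Ed d, (‖q.2 - q.1‖₊ : ℝ≥0∞) ^ p ≤
      LpAddConst (ENNReal.ofReal p)⁻¹ * ((‖q.2‖₊ : ℝ≥0∞) ^ p + (‖q.1‖₊ : ℝ≥0∞) ^ p) := fun q =>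
    calc (‖q.2 - q.1‖₊ : ℝ≥0∞) ^ p ≤ ((‖q.2‖₊ : ℝ≥0∞) + ‖q.1‖₊) ^ p := by
          gcongr
          exact_mod_cast nnnorm_sub_le q.2 q.1
      _ ≤ _ := ENNReal.rpow_add_le_mul_rpow_add_rpow' _ _ hp
  have hbound : ∫⁻ q, (‖q.2 - q.1‖₊ : ℝ≥0∞) ^ p ∂(μ.prod ν) ≤
      LpAddConst (ENNReal.ofReal p)⁻¹ *
        ((∫⁻ y, (‖y‖₊ : ℝ≥0∞) ^ p ∂ν) + ∫⁻ y, (‖y‖₊ : ℝ≥0∞) ^ p ∂μ) := by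
    refine (lintegral_mono hpt).trans_eq ?_
    rw [lintegral_const_mul' _ _ (LpAddConst_lt_top _).ne,
      lintegral_add_left (f := fun q : Ed d × Ed d => (‖q.2‖₊ : ℝ≥0∞) ^ p)
        (hmom.comp measurable_snd), ← lintegral_map hmom measurable_snd,
      ← lintegral_map hmom measurable_fst, Measure.map_snd_prod, Measure.map_fst_prod]
    simp
  exact ne_top_of_le_ne_top (ENNReal.mul_ne_top (LpAddConst_lt_top _).ne
    (ENNReal.add_ne_top.2 ⟨hν.2.ne, hμ.2.ne⟩)) hbound

lemma Wp_self (hp : 0 < p) (μ : Measure (Ed d)) : Wp p μ μ = 0 := by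
  have hdiag : Measurable fun x : Ed d => (x, x) := measurable_id.prodMk measurable_id
  have hcoupling : IsCoupling (μ.map fun x => (x, x)) μ μ := by
    constructor <;>
      simp [Measure.map_map measurable_fst hdiag, Measure.map_map measurable_snd hdiag,
        Function.comp_def]
  have hcost : ∫⁻ q, (‖q.2 - q.1‖₊ : ℝ≥0∞) ^ p ∂(μ.map fun x => (x, x)) = 0 := by
    simp [lintegral_map measurable_transportCost hdiag, ENNReal.zero_rpow_of_pos hp]
  rw [Wp, ENNReal.toReal_eq_zero_iff]
  refine Or.inl (le_antisymm ?_ zero_le)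
  refine (iInf₂_le (μ.map fun x => (x, x)) hcoupling).trans_eq ?_
  rw [hcost, ENNReal.zero_rpow_of_pos (one_div_pos.2 hp)]

lemma le_Wp_of_forall_isCoupling (hp : 0 ≤ p) (hμ : MemPp p μ) (hν : MemPp p ν) {a : ℝ}
    (h : ∀ γ, IsCoupling γ μ ν →
      ENNReal.ofReal a ≤ (∫⁻ q, (‖q.2 - q.1‖₊ : ℝ≥0∞) ^ p ∂γ) ^ (1 / p)) :
    a ≤ Wp p μ ν := by
  have := hμ.1
  have := hν.1
  refine (ENNReal.ofReal_le_iff_le_toReal ?_).1 (le_iInf₂ h)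
  refine ne_top_of_le_ne_top ?_ (iInf₂_le (μ.prod ν) isCoupling_prod)
  exact ENNReal.rpow_ne_top_of_nonneg (by positivity)
    (lintegral_transportCost_prod_ne_top hp hμ hν)

/-- Every coupling of `μ` and `ν` moves mass at least `m` from `A` into `B`, each unit over a
distance at least `L`. -/
lemma le_Wp_of_separated (hp : 0 < p) (hμ : MemPp p μ) (hν : MemPp p ν) {A B : Set (Ed d)}
    (hB : MeasurableSet B) {L m : ℝ} (hL0 : 0 ≤ L) (hm : 0 ≤ m)
    (hL : ∀ a ∈ A, ∀ b ∈ B, L ≤ ‖b - a‖) (hmass : μ Aᶜ + ENNReal.ofReal m ≤ ν B) :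
    L * m ^ (1 / p) ≤ Wp p μ ν := by
  have := hμ.1
  refine le_Wp_of_forall_isCoupling hp.le hμ hν fun γ hγ => ?_
  have hγAB : ENNReal.ofReal m ≤ γ (A ×ˢ B) := by
    rw [← ENNReal.add_le_add_iff_left (measure_ne_top μ Aᶜ), add_comm _ (γ _)]
    exact hmass.trans (hγ.measure_le_prod_add A hB)
  calc ENNReal.ofReal (L * m ^ (1 / p))
      = (ENNReal.ofReal L ^ p * ENNReal.ofReal m) ^ (1 / p) := by
        rw [ENNReal.mul_rpow_of_nonneg _ _ (by positivity), ← ENNReal.rpow_mul,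
          mul_one_div_cancel hp.ne', ENNReal.rpow_one, ENNReal.ofReal_rpow_of_nonneg hm
          (by positivity), ENNReal.ofReal_mul hL0]
    _ ≤ (ENNReal.ofReal L ^ p * γ (A ×ˢ B)) ^ (1 / p) := by gcongr
    _ ≤ _ := by
        gcongr
        exact ofReal_rpow_mul_measure_le_lintegral_transportCost hp.le hL

end Wasserstein

section Penalty

variable {p : ℝ} {φ : ℝ≥0 → ℝ≥0∞}

lemma phit_zero (hφ0 : φ 0 = 0) (t : ℝ) : phit φ t 0 = 0 := by
  simp [phit, hφ0]

/-- Convexity and `φ 0 = 0` give the linear lower bound `φ s ≥ (s / a) φ a` for `s ≥ a`. -/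
lemma IsPenalty.tendsto_atTop (hφ : IsPenalty p φ) : Tendsto φ atTop (𝓝 ⊤) := by
  obtain ⟨a, hφa⟩ : ∃ a, φ a ≠ 0 := by
    by_contra! h
    obtain ⟨a, b, hab⟩ := hφ.not_const
    exact hab ((h a).trans (h b).symm)
  have ha : 0 < a := pos_iff_ne_zero.2 fun h => hφa (h ▸ hφ.map_zero)
  have hlin : ∀ s, a ≤ s → ((s / a : ℝ≥0) : ℝ≥0∞) * φ a ≤ φ s := fun s has => by
    have hs : 0 < s := ha.trans_le has
    have hconv := hφ.convex s 0 (a / s) (1 - a / s)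
      (add_tsub_cancel_of_le (div_le_one_of_le₀ has hs.le))
    rw [mul_zero, add_zero, div_mul_cancel₀ _ hs.ne', hφ.map_zero, mul_zero, add_zero] at hconv
    calc ((s / a : ℝ≥0) : ℝ≥0∞) * φ a ≤ ((s / a : ℝ≥0) : ℝ≥0∞) * ((a / s : ℝ≥0) * φ s) := by
          gcongr
      _ = φ s := by
          have hone : s / a * (a / s) = 1 := by field_simp
          rw [← mul_assoc, ← ENNReal.coe_mul, hone, ENNReal.coe_one, one_mul]
  refine tendsto_nhds_top_mono ?_ (eventually_atTop.2 ⟨a, hlin⟩)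
  have := ENNReal.Tendsto.mul_const (ENNReal.tendsto_coe_nhds_top.2 (tendsto_id.atTop_div_const ha))
    (Or.inl ENNReal.top_ne_zero) (b := φ a)
  rwa [ENNReal.top_mul hφa] at this

lemma IsPenalty.tendsto_phit_atTop (hφ : IsPenalty p φ) (t : ℝ) :
    Tendsto (phit φ t) atTop (𝓝 ⊤) := by
  by_cases ht : 0 < t
  · rw [show phit φ t = fun r => t.toNNReal * φ (r / t.toNNReal) from funext fun r => if_pos ht]
    have hT : (t.toNNReal : ℝ≥0∞) ≠ 0 := by simpa using ht
    have := ENNReal.Tendsto.const_mul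
      (hφ.tendsto_atTop.comp (tendsto_id.atTop_div_const (Real.toNNReal_pos.2 ht)))
      (Or.inr (ENNReal.coe_ne_top (r := t.toNNReal)))
    rwa [ENNReal.mul_top hT] at this
  · refine tendsto_const_nhds.congr' ?_
    filter_upwards [eventually_gt_atTop 0] with r hr
    simp [phit, ht, hr.ne']

end Penalty

section Sop

variable {d : ℕ} {p : ℝ} {φ : ℝ≥0 → ℝ≥0∞} {μ ν : Measure (Ed d)} {t : ℝ}

lemma integrable_comp_add (f : C₀(Ed d, ℝ)) (ν : Measure (Ed d)) [IsFiniteMeasure ν]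
    (x : Ed d) : Integrable (fun y => f (x + y)) ν :=
  Integrable.of_bound (by fun_prop : Continuous fun y => f (x + y)).aestronglyMeasurable ‖f‖
    (ae_of_all _ fun y => f.norm_coe_le_norm (x + y))

lemma integral_comp_add_le_norm (f : C₀(Ed d, ℝ)) (ν : Measure (Ed d))
    [IsProbabilityMeasure ν] (x : Ed d) : ∫ y, f (x + y) ∂ν ≤ ‖f‖ :=
  (le_abs_self _).trans <| by
    simpa using norm_integral_le_of_norm_le_const
      (ae_of_all ν fun y => f.norm_coe_le_norm (x + y))

lemma integral_sub_le_Sop (f : C₀(Ed d, ℝ)) (x : Ed d) (hν : MemPp p ν) {c : ℝ} (hc : 0 ≤ c)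
    (hνc : phit φ t (Wp p μ ν).toNNReal ≤ ENNReal.ofReal c) :
    ∫ y, f (x + y) ∂ν - c ≤ Sop p φ μ t f x := by
  refine le_csSup ⟨‖f‖, ?_⟩ ⟨ν, hν, c, hc, hνc, rfl⟩
  rintro _ ⟨ν', hν', c', hc', -, rfl⟩
  have := hν'.1
  linarith [integral_comp_add_le_norm f ν' x]

lemma Sop_le (hp : 0 < p) (hφ0 : φ 0 = 0) (hμ : MemPp p μ) (f : C₀(Ed d, ℝ)) (x : Ed d)
    {b : ℝ} (h : ∀ ν, MemPp p ν → ∀ c, 0 ≤ c → phit φ t (Wp p μ ν).toNNReal ≤ ENNReal.ofReal c →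
      ∫ y, f (x + y) ∂ν - c ≤ b) :
    Sop p φ μ t f x ≤ b :=
  csSup_le ⟨_, μ, hμ, 0, le_rfl, by simp [Wp_self hp, phit_zero hφ0], rfl⟩
    fun _ ⟨ν, hν, c, hc, hνc, hr⟩ => hr ▸ h ν hν c hc hνc

lemma integral_le_Sop (hp : 0 < p) (hφ0 : φ 0 = 0) (hμ : MemPp p μ) (f : C₀(Ed d, ℝ))
    (x : Ed d) : ∫ y, f (x + y) ∂μ ≤ Sop p φ μ t f x := by
  simpa using integral_sub_le_Sop f x hμ le_rfl (by simp [Wp_self hp, phit_zero hφ0])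

lemma Sop_le_Sop_add (hp : 0 < p) (hφ0 : φ 0 = 0) (hμ : MemPp p μ) (f : C₀(Ed d, ℝ))
    {x y : Ed d} {ε : ℝ} (h : ∀ z, f (x + z) ≤ f (y + z) + ε) :
    Sop p φ μ t f x ≤ Sop p φ μ t f y + ε := by
  refine Sop_le hp hφ0 hμ f x fun ν hν c hc hνc => ?_
  have := hν.1
  have hint : ∫ z, f (x + z) ∂ν ≤ ∫ z, f (y + z) ∂ν + ε :=
    calc ∫ z, f (x + z) ∂ν ≤ ∫ z, (f (y + z) + ε) ∂ν :=
          integral_mono (integrable_comp_add f ν x)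
            ((integrable_comp_add f ν y).add (integrable_const ε)) h
      _ = ∫ z, f (y + z) ∂ν + ε := by
          rw [integral_add (integrable_comp_add f ν y) (integrable_const ε)]
          simp
  linarith [integral_sub_le_Sop (t := t) f y hν hc hνc]

lemma abs_Sop_sub_Sop_le (hp : 0 < p) (hφ0 : φ 0 = 0) (hμ : MemPp p μ) (f : C₀(Ed d, ℝ))
    {x y : Ed d} {ε : ℝ} (h : ∀ z, |f (x + z) - f (y + z)| ≤ ε) :
    |Sop p φ μ t f x - Sop p φ μ t f y| ≤ ε := by
  rw [abs_sub_le_iff]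
  constructor
  · linarith [Sop_le_Sop_add (t := t) (x := x) (y := y) (ε := ε) hp hφ0 hμ f fun z => by
      linarith [(abs_le.1 (h z)).2]]
  · linarith [Sop_le_Sop_add (t := t) (x := y) (y := x) (ε := ε) hp hφ0 hμ f fun z => by
      linarith [(abs_le.1 (h z)).1]]

lemma uniformContinuous_Sop (hp : 0 < p) (hφ0 : φ 0 = 0) (hμ : MemPp p μ)
    (f : C₀(Ed d, ℝ)) : UniformContinuous (Sop p φ μ t f) := by
  rw [Metric.uniformContinuous_iff]
  intro ε hε
  obtain ⟨δ, hδ, hf⟩ := Metric.uniformContinuous_iff.1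
    (ZeroAtInftyContinuousMap.uniformContinuous f) (ε / 2) (half_pos hε)
  refine ⟨δ, hδ, fun {x y} hxy => ?_⟩
  have hmod : ∀ z, |f (x + z) - f (y + z)| ≤ ε / 2 := fun z =>
    (hf (by rwa [dist_add_right])).le
  rw [Real.dist_eq]
  linarith [abs_Sop_sub_Sop_le (t := t) hp hφ0 hμ f hmod]

end Sop

section Decay

variable {d : ℕ} {p : ℝ} {φ : ℝ≥0 → ℝ≥0∞} {μ : Measure (Ed d)} {t : ℝ}

/-- A competitor either puts mass less than `m` on `B`, the only place where `f (x + ·)` may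
exceed `η`, or pays a penalty at least `‖f‖`. -/
lemma Sop_le_of_penalty_ge (hp : 0 < p) (hφ0 : φ 0 = 0) (hμ : MemPp p μ) (f : C₀(Ed d, ℝ))
    (x : Ed d) {B : Set (Ed d)} (hB : MeasurableSet B) {η m : ℝ} (hη : 0 ≤ η) (hm : 0 ≤ m)
    (hfB : ∀ y ∉ B, |f (x + y)| ≤ η)
    (hpen : ∀ ν, MemPp p ν → ENNReal.ofReal m ≤ ν B →
      ENNReal.ofReal ‖f‖ ≤ phit φ t (Wp p μ ν).toNNReal) :
    Sop p φ μ t f x ≤ η + ‖f‖ * m := by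
  refine Sop_le hp hφ0 hμ f x fun ν hν c hc hνc => ?_
  have := hν.1
  rcases lt_or_ge (ν B) (ENNReal.ofReal m) with hνB | hνB
  · have hsplit := abs_integral_le_add_mul_measureReal (ν := ν) (g := fun y => f (x + y))
      ((map_continuous f).comp (continuous_const_add x)).measurable hB hη hfB
      fun y => f.norm_coe_le_norm (x + y)
    have hνB' : ‖f‖ * ν.real B ≤ ‖f‖ * m :=
      mul_le_mul_of_nonneg_left (ENNReal.toReal_le_of_le_ofReal hm hνB.le) (norm_nonneg f)
    linarith [le_abs_self (∫ y, f (x + y) ∂ν)]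
  · have hfc : ‖f‖ ≤ c := (ENNReal.ofReal_le_ofReal_iff hc).1 ((hpen ν hν hνB).trans hνc)
    linarith [integral_comp_add_le_norm f ν x, mul_nonneg (norm_nonneg f) hm]

lemma neg_add_mul_le_Sop (hp : 0 < p) (hφ0 : φ 0 = 0) (hμ : MemPp p μ) (f : C₀(Ed d, ℝ))
    (x : Ed d) {B : Set (Ed d)} (hB : MeasurableSet B) {η m : ℝ} (hη : 0 ≤ η)
    (hfB : ∀ y ∉ B, |f (x + y)| ≤ η) (hμB : μ.real B ≤ m) :
    -(η + ‖f‖ * m) ≤ Sop p φ μ t f x := by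
  have := hμ.1
  have hsplit := abs_integral_le_add_mul_measureReal (ν := μ) (g := fun y => f (x + y))
    ((map_continuous f).comp (continuous_const_add x)).measurable hB hη hfB
    fun y => f.norm_coe_le_norm (x + y)
  have hμB' : ‖f‖ * μ.real B ≤ ‖f‖ * m := mul_le_mul_of_nonneg_left hμB (norm_nonneg f)
  linarith [neg_abs_le (∫ y, f (x + y) ∂μ), integral_le_Sop (t := t) hp hφ0 hμ f x]

lemma abs_Sop_le_of_norm_gt (hp : 0 < p) (hφ0 : φ 0 = 0) (hμ : MemPp p μ) (f : C₀(Ed d, ℝ))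
    {K : Set (Ed d)} {R S L η m : ℝ} (hη : 0 ≤ η) (hm : 0 ≤ m) (hL : 0 ≤ L)
    (hR : ∀ z, R < ‖z‖ → |f z| ≤ η) (hS : K ⊆ Metric.closedBall 0 S)
    (hμK : μ Kᶜ ≤ ENNReal.ofReal (m / 2))
    (hpen : ∀ ν, MemPp p ν → L * (m / 2) ^ (1 / p) ≤ Wp p μ ν →
      ENNReal.ofReal ‖f‖ ≤ phit φ t (Wp p μ ν).toNNReal)
    {x : Ed d} (hx : R + S + L < ‖x‖) :
    |Sop p φ μ t f x| ≤ η + ‖f‖ * m := by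
  have := hμ.1
  set B := Metric.closedBall (-x) R
  have hfB : ∀ y ∉ B, |f (x + y)| ≤ η := fun y hy =>
    hR _ (by simpa [B, dist_eq_norm, add_comm] using hy)
  have hsep : ∀ a ∈ K, ∀ b ∈ B, L ≤ ‖b - a‖ := fun a ha b hb => by
    linarith [norm_le_add_add_norm_sub_of_mem_closedBall (hS ha) hb]
  rw [abs_le]
  constructor
  · have hBK : B ⊆ Kᶜ := fun b hb hbK => by
      have hbb := norm_le_add_add_norm_sub_of_mem_closedBall (hS hbK) hb
      rw [sub_self, norm_zero] at hbb
      linarith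
    refine neg_add_mul_le_Sop hp hφ0 hμ f x measurableSet_closedBall hη hfB ?_
    exact (measureReal_mono hBK).trans
      ((ENNReal.toReal_le_of_le_ofReal (by positivity) hμK).trans (by linarith))
  · refine Sop_le_of_penalty_ge hp hφ0 hμ f x measurableSet_closedBall hη hm hfB
      fun ν hν hνB => hpen ν hν ?_
    refine le_Wp_of_separated hp hμ hν measurableSet_closedBall hL (by positivity) hsep ?_
    calc μ Kᶜ + ENNReal.ofReal (m / 2) ≤ ENNReal.ofReal (m / 2) + ENNReal.ofReal (m / 2) := by
          gcongr
      _ = ENNReal.ofReal m := by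
          rw [← ENNReal.ofReal_add (by positivity) (by positivity), add_halves]
      _ ≤ ν B := hνB

lemma exists_abs_Sop_le (hp : 0 < p) (hφ : IsPenalty p φ) (hμ : MemPp p μ) (t : ℝ)
    (f : C₀(Ed d, ℝ)) {ε : ℝ} (hε : 0 < ε) :
    ∃ R, ∀ x : Ed d, R < ‖x‖ → |Sop p φ μ t f x| ≤ ε := by
  have := hμ.1
  set m := ε / 2 / (‖f‖ + 1)
  have hm : 0 < m := by positivity
  have hfm : ‖f‖ * m ≤ ε / 2 :=
    calc ‖f‖ * m ≤ (‖f‖ + 1) * m := by gcongr; linarith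
      _ = ε / 2 := by simp only [m]; field_simp
  obtain ⟨R, hR⟩ := tendsto_cocompact_nhds_zero_iff.1 (zero_at_infty f) (ε / 2) (half_pos hε)
  obtain ⟨K, hK, hμK⟩ := isTightMeasureSet_iff_exists_isCompact_measure_compl_le.1
    (isTightMeasureSet_singleton (μ := μ)) (ENNReal.ofReal (m / 2)) (by positivity)
  obtain ⟨S, hS⟩ := hK.isBounded.subset_closedBall 0
  obtain ⟨W, hW⟩ := eventually_atTop.1 ((hφ.tendsto_phit_atTop t).eventually
    (le_mem_nhds (ENNReal.ofReal_lt_top (r := ‖f‖))))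
  have hmp : 0 < (m / 2) ^ (1 / p) := by positivity
  refine ⟨R + S + W / (m / 2) ^ (1 / p), fun x hx => ?_⟩
  refine (abs_Sop_le_of_norm_gt hp hφ.map_zero hμ f (half_pos hε).le hm.le (by positivity) hR hS
    (hμK μ rfl) (fun ν _ hWp => hW _ ?_) hx).trans (by linarith)
  rw [div_mul_cancel₀ _ hmp.ne'] at hWp
  exact Real.toNNReal_coe (r := W) ▸ Real.toNNReal_le_toNNReal hWp

lemma tendsto_Sop_cocompact (hp : 0 < p) (hφ : IsPenalty p φ) (hμ : MemPp p μ) (t : ℝ)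
    (f : C₀(Ed d, ℝ)) : Tendsto (Sop p φ μ t f) (cocompact (Ed d)) (𝓝 0) :=
  tendsto_cocompact_nhds_zero_iff.2 fun _ hε => exists_abs_Sop_le hp hφ hμ t f hε

end Decay

theorem stmt_13_general (d : ℕ) (p : ℝ) (hp : 1 < p)
    (φ : ℝ≥0 → ℝ≥0∞) (hφ : IsPenalty p φ)
    (μ : Measure (Ed d)) (hμ : MemPp p μ) (t : ℝ) (f : C₀(Ed d, ℝ)) :
    IsC0 (Sop p φ μ t (⇑f)) ∧
    (∀ ε δ : ℝ, 0 < ε → 0 < δ →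
      (∀ x y : Ed d, ‖x - y‖ ≤ δ → |f x - f y| ≤ ε) →
      ∀ x y : Ed d, ‖x - y‖ ≤ δ → |Sop p φ μ t (⇑f) x - Sop p φ μ t (⇑f) y| ≤ ε) := by
  have hp0 : 0 < p := zero_lt_one.trans hp
  refine ⟨⟨(uniformContinuous_Sop hp0 hφ.map_zero hμ f).continuous,
    tendsto_Sop_cocompact hp0 hφ hμ t f⟩, fun ε δ _ _ hf x y hxy => ?_⟩
  exact abs_Sop_sub_Sop_le hp0 hφ.map_zero hμ f fun z =>
    hf (x + z) (y + z) (by rwa [add_sub_add_right_eq_sub])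

/-- `S(t)f ∈ C₀(ℝ^d)`, and `S(t)f` has the same modulus of continuity
as `f`. -/
theorem stmt_13 (d : ℕ) (hd : 1 ≤ d) (p : ℝ) (hp : 1 < p)
    (φ : ℝ≥0 → ℝ≥0∞) (hφ : IsPenalty p φ)
    (μ : Measure (Ed d)) (hμ : MemPp p μ) (t : ℝ) (ht : 0 ≤ t) (f : C₀(Ed d, ℝ)) :
    IsC0 (Sop p φ μ t (⇑f)) ∧
    (∀ ε δ : ℝ, 0 < ε → 0 < δ →
      (∀ x y : Ed d, ‖x - y‖ ≤ δ → |f x - f y| ≤ ε) →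
      ∀ x y : Ed d, ‖x - y‖ ≤ δ → |Sop p φ μ t (⇑f) x - Sop p φ μ t (⇑f) y| ≤ ε) :=
  stmt_13_general d p hp φ hφ μ hμ t f
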